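/- arXiv:2104.02534 — 4 statements merged into one kernel-verified Lean document; each statement's English description precedes it below -/
import Mathlib

section
/- Every direct product of two finite nonempty chains admits a Czédli diagram: for all natural numbers m and n, the finite lattice Fin (m+1) × Fin (n+1) (with the componentwise order) has a Czédli diagram. -/
/-- An edge from `p` to `q` (drawn with `p.2 < q.2`) is *normal* if it has slope 45° or 135°. -/
def IsNormalEdge (p q : ℝ × ℝ) : Prop :=
  q.2 - p.2 = |q.1 - p.1|

/-- An edge from `p` to `q` is *steep* if its slope is strictly between 45° and 135°. -/
def IsSteepEdge (p q : ℝ × ℝ) : Prop :=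
  |q.1 - p.1| < q.2 - p.2

/-- A planar diagram of a lattice `L`: an injective map into the plane, increasing in the
second coordinate, where the closed segment of a covering pair contains no other vertex,
and segments of distinct covering pairs meet only in common endpoints. -/
def IsPlanarDiagram {L : Type*} [Lattice L] (f : L → ℝ × ℝ) : Prop :=
  Function.Injective f ∧
  (∀ x y : L, x < y → (f x).2 < (f y).2) ∧
  (∀ x y : L, x ⋖ y → ∀ z : L, z ≠ x → z ≠ y → f z ∉ segment ℝ (f x) (f y)) ∧
  (∀ x y x' y' : L, x ⋖ y → x' ⋖ y' → (x, y) ≠ (x', y') →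
    ∀ p : ℝ × ℝ, p ∈ segment ℝ (f x) (f y) → p ∈ segment ℝ (f x') (f y') →
      ∃ w : L, (w = x ∨ w = y) ∧ (w = x' ∨ w = y') ∧ p = f w)

/-- A covering `S7` in a lattice: seven pairwise distinct elements
`o, a, b, c, d, e, t` with the prescribed covering relations, meets and joins.
The pair `(d, t)` is its middle edge. -/
def IsCoveringS7 {L : Type*} [Lattice L] (o a b c d e t : L) : Prop :=
  [o, a, b, c, d, e, t].Pairwise (· ≠ ·) ∧
  o ⋖ a ∧ o ⋖ b ∧ a ⋖ c ∧ a ⋖ d ∧ b ⋖ d ∧ b ⋖ e ∧ c ⋖ t ∧ d ⋖ t ∧ e ⋖ t ∧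
  a ⊓ b = o ∧ a ⊔ b = d ∧ c ⊓ d = a ∧ d ⊓ e = b ∧ c ⊓ e = o ∧
  c ⊔ d = t ∧ d ⊔ e = t ∧ c ⊔ e = t

/-- `(x, y)` is the middle edge of some covering `S7` in the lattice. -/
def IsMiddleEdgeOfS7 {L : Type*} [Lattice L] (x y : L) : Prop :=
  ∃ o a b c e : L, IsCoveringS7 o a b c x e y

/-- A Czédli diagram: a planar diagram in which the middle edge of any covering `S7`
is steep and all other edges are normal. -/
def IsCzedliDiagram {L : Type*} [Lattice L] (f : L → ℝ × ℝ) : Prop :=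
  IsPlanarDiagram f ∧
  ∀ x y : L, x ⋖ y →
    (IsMiddleEdgeOfS7 x y → IsSteepEdge (f x) (f y)) ∧
    (¬ IsMiddleEdgeOfS7 x y → IsNormalEdge (f x) (f y))


/-! The grid point `(i, j)` is placed at `(j - i, i + j)`, the image of `(i, j)` under an injective
linear map taking the coordinate axes to the diagonals. A covering pair of a product of two chains
is a step along one coordinate, so every edge is drawn at 45°, and its segment is the image of an
order interval of the plane. Two such intervals meet in `[x ⊔ x', y ⊓ y']`, which for
distinct covering pairs is at most a common endpoint. There is no covering S7 at all: its top would
have three lower covers, while an element of a product of two chains has at most two. -/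

open Set

section Segment

variable {𝕜 : Type*} [Field 𝕜] [LinearOrder 𝕜] [IsStrictOrderedRing 𝕜]

theorem Prod.segment_eq_Icc_of_snd_eq {a b : 𝕜 × 𝕜} (h₁ : a.1 ≤ b.1) (h₂ : a.2 = b.2) :
    segment 𝕜 a b = Icc a b := by
  obtain ⟨a₁, c⟩ := a
  obtain ⟨b₁, c'⟩ := b
  obtain rfl : c = c' := h₂
  rw [← Prod.image_mk_segment_left, segment_eq_Icc h₁, ← Icc_prod_Icc, Icc_self, prod_singleton]

theorem Prod.segment_eq_Icc_of_fst_eq {a b : 𝕜 × 𝕜} (h₁ : a.1 = b.1) (h₂ : a.2 ≤ b.2) :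
    segment 𝕜 a b = Icc a b := by
  obtain ⟨c, a₂⟩ := a
  obtain ⟨c', b₂⟩ := b
  obtain rfl : c = c' := h₁
  rw [← Prod.image_mk_segment_right, segment_eq_Icc h₂, ← Icc_prod_Icc, Icc_self, singleton_prod]

end Segment

section CovBy

theorem CovBy.eq_and_eq_of_lt {α : Type*} [PartialOrder α] {a b s i : α} (h : a ⋖ b)
    (has : a ≤ s) (hsi : s < i) (hib : i ≤ b) : s = a ∧ i = b := by
  refine ⟨(h.eq_or_eq has (hsi.le.trans hib)).resolve_right ?_,
    (h.eq_or_eq (has.trans hsi.le) hib).resolve_left ?_⟩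
  · rintro rfl
    exact hsi.not_ge hib
  · rintro rfl
    exact hsi.not_ge has

theorem CovBy.sup_eq_inf {L : Type*} [Lattice L] {x y x' y' : L} (h : x ⋖ y) (h' : x' ⋖ y')
    (hne : (x, y) ≠ (x', y')) (hle : x ⊔ x' ≤ y ⊓ y') : x ⊔ x' = y ⊓ y' := by
  by_contra hlt
  replace hlt := lt_of_le_of_ne hle hlt
  obtain ⟨hx, hy⟩ := h.eq_and_eq_of_lt le_sup_left hlt inf_le_left
  obtain ⟨hx', hy'⟩ := h'.eq_and_eq_of_lt le_sup_right hlt inf_le_right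
  exact hne (Prod.ext (hx.symm.trans hx') (hy.symm.trans hy'))

theorem eq_or_eq_or_eq_of_wcovBy {α : Type*} [LinearOrder α] {a b c t : α} (ha : a ⩿ t)
    (hb : b ⩿ t) (hc : c ⩿ t) : a = b ∨ b = c ∨ a = c := by
  grind [wcovBy_iff_eq_or_covBy, CovBy.unique_left]

end CovBy

section ChainProduct

variable {α β : Type*} [LinearOrder α] [LinearOrder β]

theorem Prod.eq_of_covBy_of_snd_eq {x y t : α × β} (hx : x ⋖ t) (hy : y ⋖ t) (h : x.2 = y.2) :
    x = y := by
  rcases Prod.covBy_iff.1 hx with ⟨hx₁, hx₂⟩ | ⟨hx₂, hx₁⟩ <;>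
    rcases Prod.covBy_iff.1 hy with ⟨hy₁, hy₂⟩ | ⟨hy₂, hy₁⟩
  · exact Prod.ext (hx₁.unique_left hy₁) h
  · exact (hy₂.ne (h.symm.trans hx₂)).elim
  · exact (hx₂.ne (h.trans hy₂)).elim
  · exact Prod.ext (hx₁.trans hy₁.symm) h

theorem Prod.eq_or_eq_or_eq_of_covBy {c d e t : α × β} (hc : c ⋖ t) (hd : d ⋖ t) (he : e ⋖ t) :
    c = d ∨ d = e ∨ c = e := by
  rcases eq_or_eq_or_eq_of_wcovBy hc.wcovBy.snd hd.wcovBy.snd he.wcovBy.snd with h | h | h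
  · exact Or.inl (Prod.eq_of_covBy_of_snd_eq hc hd h)
  · exact Or.inr (Or.inl (Prod.eq_of_covBy_of_snd_eq hd he h))
  · exact Or.inr (Or.inr (Prod.eq_of_covBy_of_snd_eq hc he h))

theorem Prod.not_isMiddleEdgeOfS7 (x y : α × β) : ¬ IsMiddleEdgeOfS7 x y := by
  rintro ⟨o, a, b, c, e, hdistinct, -, -, -, -, -, -, hct, hxt, het, -⟩
  rcases Prod.eq_or_eq_or_eq_of_covBy hct hxt het with rfl | rfl | rfl <;> simp at hdistinct

end ChainProduct

def tilt : ℝ × ℝ →ₗ[ℝ] ℝ × ℝ :=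
  (LinearMap.snd ℝ ℝ ℝ - LinearMap.fst ℝ ℝ ℝ).prod (LinearMap.fst ℝ ℝ ℝ + LinearMap.snd ℝ ℝ ℝ)

theorem tilt_apply (p : ℝ × ℝ) : tilt p = (p.2 - p.1, p.1 + p.2) := rfl

theorem tilt_injective : Function.Injective tilt := by
  intro p q h
  simp only [tilt_apply, Prod.mk.injEq] at h
  exact Prod.ext (by linarith [h.1, h.2]) (by linarith [h.1, h.2])

section ChainProductDiagram

variable {α β : Type*} [LinearOrder α] [LinearOrder β] {u : α → ℝ} {v : β → ℝ}

def chainProdDiagram (u : α → ℝ) (v : β → ℝ) : α × β → ℝ × ℝ :=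
  tilt ∘ Prod.map u v

theorem Prod.map_le_map_iff (hu : StrictMono u) (hv : StrictMono v) {x y : α × β} :
    Prod.map u v x ≤ Prod.map u v y ↔ x ≤ y := by
  simp only [Prod.le_def, Prod.map_fst, Prod.map_snd, hu.le_iff_le, hv.le_iff_le]

theorem Prod.map_sup (hu : Monotone u) (hv : Monotone v) (x y : α × β) :
    Prod.map u v (x ⊔ y) = Prod.map u v x ⊔ Prod.map u v y :=
  Prod.ext hu.map_max hv.map_max

theorem Prod.map_inf (hu : Monotone u) (hv : Monotone v) (x y : α × β) :
    Prod.map u v (x ⊓ y) = Prod.map u v x ⊓ Prod.map u v y :=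
  Prod.ext hu.map_min hv.map_min

theorem segment_map_eq_Icc_of_covBy (hu : Monotone u) (hv : Monotone v) {x y : α × β}
    (hxy : x ⋖ y) :
    segment ℝ (Prod.map u v x) (Prod.map u v y) = Icc (Prod.map u v x) (Prod.map u v y) := by
  rcases Prod.fst_eq_or_snd_eq_of_wcovBy hxy.wcovBy with h | h
  · exact Prod.segment_eq_Icc_of_fst_eq (congrArg u h) (hv hxy.le.2)
  · exact Prod.segment_eq_Icc_of_snd_eq (hu hxy.le.1) (congrArg v h)

theorem segment_chainProdDiagram (hu : Monotone u) (hv : Monotone v) {x y : α × β}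
    (hxy : x ⋖ y) : segment ℝ (chainProdDiagram u v x) (chainProdDiagram u v y) =
      tilt '' Icc (Prod.map u v x) (Prod.map u v y) := by
  rw [← segment_map_eq_Icc_of_covBy hu hv hxy, ← LinearMap.coe_toAffineMap, image_segment]
  rfl

theorem isPlanarDiagram_chainProdDiagram (hu : StrictMono u) (hv : StrictMono v) :
    IsPlanarDiagram (chainProdDiagram u v) := by
  refine ⟨tilt_injective.comp (hu.injective.prodMap hv.injective), ?_, ?_, ?_⟩
  · intro x y hxy
    show u x.1 + v x.2 < u y.1 + v y.2
    rcases Prod.lt_iff.1 hxy with ⟨h₁, h₂⟩ | ⟨h₁, h₂⟩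
    · exact add_lt_add_of_lt_of_le (hu h₁) (hv.monotone h₂)
    · exact add_lt_add_of_le_of_lt (hu.monotone h₁) (hv h₂)
  · intro x y hxy z hzx hzy hz
    rw [segment_chainProdDiagram hu.monotone hv.monotone hxy, chainProdDiagram,
      Function.comp_apply, tilt_injective.mem_set_image, mem_Icc, Prod.map_le_map_iff hu hv,
      Prod.map_le_map_iff hu hv] at hz
    exact (hxy.eq_or_eq hz.1 hz.2).elim hzx hzy
  · intro x y x' y' hxy hxy' hne p hp hp'
    rw [segment_chainProdDiagram hu.monotone hv.monotone hxy] at hp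
    rw [segment_chainProdDiagram hu.monotone hv.monotone hxy'] at hp'
    obtain ⟨q, hq, rfl⟩ : p ∈ tilt '' (Icc _ _ ∩ Icc _ _) := by
      rw [image_inter tilt_injective]
      exact ⟨hp, hp'⟩
    rw [Icc_inter_Icc, ← Prod.map_sup hu.monotone hv.monotone,
      ← Prod.map_inf hu.monotone hv.monotone] at hq
    have hw : x ⊔ x' = y ⊓ y' :=
      hxy.sup_eq_inf hxy' hne ((Prod.map_le_map_iff hu hv).1 (hq.1.trans hq.2))
    refine ⟨x ⊔ x', hxy.eq_or_eq le_sup_left (hw ▸ inf_le_left),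
      hxy'.eq_or_eq le_sup_right (hw ▸ inf_le_right), ?_⟩
    rw [le_antisymm (hw ▸ hq.2) hq.1]
    rfl

theorem isNormalEdge_chainProdDiagram (hu : StrictMono u) (hv : StrictMono v) {x y : α × β}
    (hxy : x ⋖ y) : IsNormalEdge (chainProdDiagram u v x) (chainProdDiagram u v y) := by
  simp only [IsNormalEdge, chainProdDiagram, Function.comp_apply, tilt_apply, Prod.map_fst,
    Prod.map_snd]
  rcases Prod.covBy_iff.1 hxy with ⟨h₁, h₂⟩ | ⟨h₂, h₁⟩
  · rw [h₂, abs_of_neg (by linarith [hu h₁.lt])]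
    ring
  · rw [h₁, abs_of_pos (by linarith [hv h₂.lt])]
    ring

theorem isCzedliDiagram_chainProdDiagram (hu : StrictMono u) (hv : StrictMono v) :
    IsCzedliDiagram (chainProdDiagram u v) :=
  ⟨isPlanarDiagram_chainProdDiagram hu hv, fun x y hxy =>
    ⟨fun h => absurd h (Prod.not_isMiddleEdgeOfS7 x y),
      fun _ => isNormalEdge_chainProdDiagram hu hv hxy⟩⟩

end ChainProductDiagram

/-- Every direct product of two finite nonempty chains (a grid, with the
componentwise order) admits a Czédli diagram. -/
theorem grid_has_czedli_diagram (m n : ℕ) :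
    ∃ f : Fin (m + 1) × Fin (n + 1) → ℝ × ℝ, IsCzedliDiagram f :=
  ⟨_, isCzedliDiagram_chainProdDiagram (Nat.strictMono_cast.comp Fin.val_strictMono)
    (Nat.strictMono_cast.comp Fin.val_strictMono)⟩
end

section
/- With the quadrilateral configuration as in the context, the point p = o + (β − α, β + α) is the unique point lying both on the line {a + t • (1, 1) : t ∈ ℝ} through a with direction (1, 1) and on the line {b + s • (−1, 1) : s ∈ ℝ} through b with direction (−1, 1); moreover p lies strictly inside the 4-cell, in the sense that cross((−1, 1), p − o) < 0, cross((1, 1), p − o) > 0, cross((u₁, v₁), p − c) < 0, and cross((u₂, v₂), p − d) > 0, where cross(u, w) = u.1 * w.2 − u.2 * w.1 for u w : ℝ × ℝ. -/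
/-!
Both lines have explicit parametrisations through `p` (parameters `β` and `α`), and their
directions `(1, 1)` and `(-1, 1)` have nonzero cross product, so they meet only once.
Seen from the corners, `p - c` and `d - p` lie in the open cone `|w.2| < w.1` around
`(1, 0)`, while the upper edges `(u₁, v₁)` and `(u₂, v₂)` lie in the closed cone
`|u.1| ≤ u.2` around `(0, 1)`; every vector of the first cone is strictly clockwise of every
vector of the second.
-/

def cross (u w : ℝ × ℝ) : ℝ := u.1 * w.2 - u.2 * w.1

lemma cross_neg_right (u w : ℝ × ℝ) : cross u (-w) = -cross u w := by
  simp only [cross, Prod.fst_neg, Prod.snd_neg]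
  ring

lemma cross_neg_of_abs_le_of_abs_lt {u w : ℝ × ℝ} (hu : |u.1| ≤ u.2) (hu_pos : 0 < u.2)
    (hw : |w.2| < w.1) : cross u w < 0 := by
  have : u.1 * w.2 < u.2 * w.1 := calc
    u.1 * w.2 ≤ |u.1| * |w.2| := by rw [← abs_mul]; exact le_abs_self _
    _ ≤ u.2 * |w.2| := mul_le_mul_of_nonneg_right hu (abs_nonneg _)
    _ < u.2 * w.1 := mul_lt_mul_of_pos_left hw hu_pos
  unfold cross
  linarith

lemma eq_of_mem_lines {e f : ℝ × ℝ} (hef : cross e f ≠ 0) {a b q q' : ℝ × ℝ}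
    (hqa : ∃ t : ℝ, q = a + t • e) (hq'a : ∃ t : ℝ, q' = a + t • e)
    (hqb : ∃ s : ℝ, q = b + s • f) (hq'b : ∃ s : ℝ, q' = b + s • f) : q = q' := by
  obtain ⟨t, rfl⟩ := hqa
  obtain ⟨t', rfl⟩ := hq'a
  obtain ⟨s, hs⟩ := hqb
  obtain ⟨s', hs'⟩ := hq'b
  suffices s = s' by rw [hs, hs', this]
  have hss' : (s - s') * cross e f = 0 := by
    simp only [Prod.ext_iff, Prod.fst_add, Prod.snd_add, Prod.smul_fst, Prod.smul_snd,
      smul_eq_mul] at hs hs'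
    unfold cross
    linear_combination e.2 * (hs.1 - hs'.1) - e.1 * (hs.2 - hs'.2)
  exact sub_eq_zero.1 ((mul_eq_zero.1 hss').resolve_right hef)

theorem fork_point_unique_and_inside_general
    (o c d : ℝ × ℝ) (γ δ α β u₁ v₁ u₂ v₂ : ℝ)
    (hα : 0 < α) (hαγ : α < γ) (hβ : 0 < β) (hβδ : β < δ)
    (hc : c = o + γ • ((-1 : ℝ), (1 : ℝ))) (hd : d = o + δ • ((1 : ℝ), (1 : ℝ)))
    (hu₁ : |u₁| ≤ v₁) (hv₁ : 0 < v₁)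
    (hu₂ : |u₂| ≤ v₂) (hv₂ : 0 < v₂)
    (a b p : ℝ × ℝ)
    (ha : a = o + α • ((-1 : ℝ), (1 : ℝ))) (hb : b = o + β • ((1 : ℝ), (1 : ℝ)))
    (hp : p = o + (β - α, β + α)) :
    ((∃ t : ℝ, p = a + t • ((1 : ℝ), (1 : ℝ))) ∧
     (∃ s : ℝ, p = b + s • ((-1 : ℝ), (1 : ℝ))) ∧
     (∀ q : ℝ × ℝ, (∃ t : ℝ, q = a + t • ((1 : ℝ), (1 : ℝ))) →
        (∃ s : ℝ, q = b + s • ((-1 : ℝ), (1 : ℝ))) → q = p)) ∧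
    cross ((-1 : ℝ), (1 : ℝ)) (p - o) < 0 ∧
    cross ((1 : ℝ), (1 : ℝ)) (p - o) > 0 ∧
    cross (u₁, v₁) (p - c) < 0 ∧
    cross (u₂, v₂) (p - d) > 0 := by
  have hpa : p = a + β • ((1 : ℝ), (1 : ℝ)) := by
    rw [hp, ha]
    ext <;> simp only [Prod.fst_add, Prod.snd_add, Prod.smul_fst, Prod.smul_snd, smul_eq_mul] <;>
      ring
  have hpb : p = b + α • ((-1 : ℝ), (1 : ℝ)) := by
    rw [hp, hb]
    ext <;> simp only [Prod.fst_add, Prod.snd_add, Prod.smul_fst, Prod.smul_snd, smul_eq_mul] <;>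
      ring
  have hpo : p - o = (β - α, β + α) := by rw [hp, add_sub_cancel_left]
  have hpc : p - c = (β - α + γ, β + α - γ) := by
    rw [hp, hc, add_sub_add_left_eq_sub]
    ext <;> simp only [Prod.fst_sub, Prod.snd_sub, Prod.smul_fst, Prod.smul_snd, smul_eq_mul] <;>
      ring
  have hdp : d - p = (δ + α - β, δ - α - β) := by
    rw [hp, hd, add_sub_add_left_eq_sub]
    ext <;> simp only [Prod.fst_sub, Prod.snd_sub, Prod.smul_fst, Prod.smul_snd, smul_eq_mul] <;>
      ring
  refine ⟨⟨⟨β, hpa⟩, ⟨α, hpb⟩, fun q hqa hqb ↦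
    eq_of_mem_lines (by norm_num [cross]) hqa ⟨β, hpa⟩ hqb ⟨α, hpb⟩⟩, ?_, ?_, ?_, ?_⟩
  · rw [hpo, cross]
    linarith
  · rw [hpo, cross]
    linarith
  · rw [hpc]
    exact cross_neg_of_abs_le_of_abs_lt (u := (u₁, v₁)) hu₁ hv₁
      (abs_lt.2 ⟨by linarith, by linarith⟩)
  · rw [← neg_sub, hdp, cross_neg_right, gt_iff_lt, neg_pos]
    exact cross_neg_of_abs_le_of_abs_lt (u := (u₂, v₂)) hu₂ hv₂
      (abs_lt.2 ⟨by linarith, by linarith⟩)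

/-- In the 4-cell with bottom `o`, left corner `c`, right corner `d` and top `i`,
whose lower edges are normal and whose upper edges are normal or steep, the point
`p = o + (β - α, β + α)` is the unique common point of the normal-up line through
`a = o + α • (-1, 1)` and the normal-down line through `b = o + β • (1, 1)`,
and `p` lies strictly inside the 4-cell. -/
theorem fork_point_unique_and_inside
    (o c d i : ℝ × ℝ) (γ δ α β u₁ v₁ u₂ v₂ : ℝ)
    (hα : 0 < α) (hαγ : α < γ) (hβ : 0 < β) (hβδ : β < δ)
    (hc : c = o + γ • ((-1 : ℝ), (1 : ℝ))) (hd : d = o + δ • ((1 : ℝ), (1 : ℝ)))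
    (hic : i - c = (u₁, v₁)) (hu₁ : |u₁| ≤ v₁) (hv₁ : 0 < v₁)
    (hid : i - d = (u₂, v₂)) (hu₂ : |u₂| ≤ v₂) (hv₂ : 0 < v₂)
    (a b p : ℝ × ℝ)
    (ha : a = o + α • ((-1 : ℝ), (1 : ℝ))) (hb : b = o + β • ((1 : ℝ), (1 : ℝ)))
    (hp : p = o + (β - α, β + α)) :
    ((∃ t : ℝ, p = a + t • ((1 : ℝ), (1 : ℝ))) ∧
     (∃ s : ℝ, p = b + s • ((-1 : ℝ), (1 : ℝ))) ∧
     (∀ q : ℝ × ℝ, (∃ t : ℝ, q = a + t • ((1 : ℝ), (1 : ℝ))) →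
        (∃ s : ℝ, q = b + s • ((-1 : ℝ), (1 : ℝ))) → q = p)) ∧
    cross ((-1 : ℝ), (1 : ℝ)) (p - o) < 0 ∧
    cross ((1 : ℝ), (1 : ℝ)) (p - o) > 0 ∧
    cross (u₁, v₁) (p - c) < 0 ∧
    cross (u₂, v₂) (p - d) > 0 :=
  fork_point_unique_and_inside_general o c d γ δ α β u₁ v₁ u₂ v₂ hα hαγ hβ hβδ hc hd hu₁ hv₁ hu₂ hv₂
    a b p ha hb hp
end

section
/- With the quadrilateral configuration as in the context, the edge from the intersection point p = o + (β − α, β + α) to the top vertex i is steep: |i.1 − p.1| < i.2 − p.2. -/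
/-!
Measure points by the two diagonal coordinates `y - x` and `y + x`. Along an edge `(u, v)` with
`|u| ≤ v` neither of them decreases. Going from `o` up the left edge to `c` raises `y - x` by `2γ`,
and going up the right edge to `d` raises `y + x` by `2δ`; `p` sits only `2α < 2γ` and
`2β < 2δ` above `o` in these coordinates, so `i` lies strictly above `p` in both of them, which is
exactly the steepness of `p i`.
-/

lemma isSteepEdge_iff (p q : ℝ × ℝ) :
    IsSteepEdge p q ↔ p.2 - p.1 < q.2 - q.1 ∧ p.2 + p.1 < q.2 + q.1 := by
  rw [IsSteepEdge, abs_lt]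
  constructor <;> rintro ⟨h₁, h₂⟩ <;> constructor <;> linarith

section DiagonalCoordinates

variable {a b : ℝ × ℝ} {u v : ℝ}

lemma snd_sub_fst_le_of_sub_eq (hab : b - a = (u, v)) (huv : |u| ≤ v) :
    a.2 - a.1 ≤ b.2 - b.1 := by
  have hu : b.1 - a.1 = u := congrArg Prod.fst hab
  have hv : b.2 - a.2 = v := congrArg Prod.snd hab
  linarith [le_abs_self u]

lemma snd_add_fst_le_of_sub_eq (hab : b - a = (u, v)) (huv : |u| ≤ v) :
    a.2 + a.1 ≤ b.2 + b.1 := by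
  have hu : b.1 - a.1 = u := congrArg Prod.fst hab
  have hv : b.2 - a.2 = v := congrArg Prod.snd hab
  linarith [neg_abs_le u]

end DiagonalCoordinates

theorem fork_middle_edge_is_steep_general
    (o c d i : ℝ × ℝ) (γ δ α β u₁ v₁ u₂ v₂ : ℝ)
    (hαγ : α < γ) (hβδ : β < δ)
    (hc : c = o + γ • ((-1 : ℝ), (1 : ℝ))) (hd : d = o + δ • ((1 : ℝ), (1 : ℝ)))
    (hic : i - c = (u₁, v₁)) (hu₁ : |u₁| ≤ v₁)
    (hid : i - d = (u₂, v₂)) (hu₂ : |u₂| ≤ v₂)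
    (p : ℝ × ℝ) (hp : p = o + (β - α, β + α)) :
    IsSteepEdge p i := by
  have hci := snd_sub_fst_le_of_sub_eq hic hu₁
  have hdi := snd_add_fst_le_of_sub_eq hid hu₂
  rw [isSteepEdge_iff]
  subst hc hd hp
  simp only [Prod.fst_add, Prod.snd_add, Prod.smul_mk, smul_eq_mul] at hci hdi ⊢
  constructor <;> linarith

/-- In the 4-cell with bottom `o`, left corner `c`, right corner `d` and top `i`,
whose lower edges are normal and whose upper edges are normal or steep, the edge
from the intersection point `p = o + (β - α, β + α)` to the top `i` is steep. -/
theorem fork_middle_edge_is_steep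
    (o c d i : ℝ × ℝ) (γ δ α β u₁ v₁ u₂ v₂ : ℝ)
    (hα : 0 < α) (hαγ : α < γ) (hβ : 0 < β) (hβδ : β < δ)
    (hc : c = o + γ • ((-1 : ℝ), (1 : ℝ))) (hd : d = o + δ • ((1 : ℝ), (1 : ℝ)))
    (hic : i - c = (u₁, v₁)) (hu₁ : |u₁| ≤ v₁) (hv₁ : 0 < v₁)
    (hid : i - d = (u₂, v₂)) (hu₂ : |u₂| ≤ v₂) (hv₂ : 0 < v₂)
    (p : ℝ × ℝ) (hp : p = o + (β - α, β + α)) :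
    IsSteepEdge p i :=
  fork_middle_edge_is_steep_general o c d i γ δ α β u₁ v₁ u₂ v₂ hαγ hβδ hc hd hic hu₁ hid hu₂ p hp
end

section
/- Let L be a semimodular lattice, i.e., for all u v : L, u ⊓ v ⋖ u implies v ⋖ u ⊔ v. Suppose a, a*, a^*, b ∈ L satisfy: a* ⋖ a, a* ⋖ b, a ≠ b, a ⋖ a^*, and a^* is the unique upper cover of a (for every t, a ⋖ t implies t = a^*). Then a ⊔ b = a^* and a* < b < a^*. In particular, the open interval (a*, a^*) contains an element different from a, so after removing a from L the pair (a*, a^*) is not a covering pair. -/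
section

variable {L : Type*} [Lattice L] {a b c : L}

theorem CovBy.inf_eq_of_covBy (ha : c ⋖ a) (hb : c ⋖ b) (hab : a ≠ b) : a ⊓ b = c := by
  rcases ha.eq_or_eq (le_inf ha.le hb.le) inf_le_left with h | h
  · exact h
  · have hlt : a < b := (inf_eq_left.mp h).lt_of_ne hab
    exact (hb.2 ha.lt hlt).elim

theorem CovBy.covBy_sup_of_covBy [IsUpperModularLattice L] (ha : c ⋖ a) (hb : c ⋖ b)
    (hab : a ≠ b) : a ⋖ a ⊔ b ∧ b ⋖ a ⊔ b := by
  have hinf : a ⊓ b = c := ha.inf_eq_of_covBy hb hab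
  exact ⟨covBy_sup_of_inf_covBy_right (hinf ▸ hb), covBy_sup_of_inf_covBy_left (hinf ▸ ha)⟩

end

theorem join_with_cover_of_unique_lower_cover_general
    {L : Type*} [Lattice L]
    (hsemi : ∀ u v : L, u ⊓ v ⋖ u → v ⋖ u ⊔ v)
    (a astar aup b : L)
    (h₁ : astar ⋖ a) (h₂ : astar ⋖ b) (hab : a ≠ b)
    (huniq : ∀ t : L, a ⋖ t → t = aup) :
    a ⊔ b = aup ∧ astar < b ∧ b < aup := by
  have : IsUpperModularLattice L := ⟨hsemi _ _⟩
  obtain ⟨ha, hb⟩ := h₁.covBy_sup_of_covBy h₂ hab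
  have hjoin : a ⊔ b = aup := huniq _ ha
  exact ⟨hjoin, h₂.lt, hjoin ▸ hb.lt⟩

/-- In a semimodular lattice, if `a` has lower cover `astar` (also covered by some
`b ≠ a`) and unique upper cover `aup`, then `a ⊔ b = aup` and `astar < b < aup`;
in particular the open interval `(astar, aup)` contains an element different from
`a`, so after removing `a` the pair `(astar, aup)` is not a covering pair. -/
theorem join_with_cover_of_unique_lower_cover
    {L : Type*} [Lattice L]
    (hsemi : ∀ u v : L, u ⊓ v ⋖ u → v ⋖ u ⊔ v)
    (a astar aup b : L)
    (h₁ : astar ⋖ a) (h₂ : astar ⋖ b) (hab : a ≠ b)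
    (h₃ : a ⋖ aup) (huniq : ∀ t : L, a ⋖ t → t = aup) :
    a ⊔ b = aup ∧ astar < b ∧ b < aup :=
  join_with_cover_of_unique_lower_cover_general hsemi a astar aup b h₁ h₂ hab huniq
end
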